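/- arXiv:2012.12656 — 5 statements merged into one kernel-verified Lean document; each statement's English description precedes it below -/
import Mathlib

section
/- Let 0 < r1 < r2 < ∞ and let f be an analytic function on A[r1,r2] with coefficients (a_n)_{n∈ℤ}. Then the function z ↦ Σ_{n∈ℤ} a_n z^n is analytic (locally expandable in a convergent power series, i.e. AnalyticAt in Mathlib's sense over the complete nontrivially normed field F) at every point z0 ∈ F with r1 < |z0| < r2. -/
/-!
Split the Laurent series into its regular part `∑ₙ aₙ zⁿ`, a power series whose terms tend to
zero on `‖z‖ = r₂`, and `∑ₙ a₋ₙ (z⁻¹)ⁿ`, a power series in `z⁻¹` whose terms tend to zero on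
`‖z⁻¹‖ = r₁⁻¹`. Both are analytic at `z₀` (the second as a composition with `z ↦ z⁻¹`). On the open
annulus the ultrametric inequality makes the `ℤ`-indexed series summable, and there it equals the
sum of the two parts minus the doubly counted `a₀`.
-/

open Filter Set

/-- `a` is the coefficient family of a Laurent series defining an analytic function on the
closed annulus `A[r1,r2]`. -/
def IsLaurentOn {F : Type*} [NontriviallyNormedField F] (a : ℤ → F) (r1 r2 : ℝ) : Prop :=
  ∀ r : ℝ, r1 ≤ r → r ≤ r2 → Tendsto (fun n : ℤ => ‖a n‖ * r ^ n) cofinite (nhds 0)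

open Topology

section PowerSeries

variable {F : Type*} [NontriviallyNormedField F] [CompleteSpace F]

theorem analyticAt_tsum_mul_pow_of_tendsto {c : ℕ → F} {R : ℝ}
    (hc : Tendsto (fun n => ‖c n‖ * R ^ n) atTop (𝓝 0)) {x : F} (hx : ‖x‖ < R) :
    AnalyticAt F (fun z => ∑' n, c n * z ^ n) x := by
  have hR : 0 ≤ R := (norm_nonneg x).trans hx.le
  have hradius : (R.toNNReal : ENNReal) ≤ (FormalMultilinearSeries.ofScalars F c).radius := by
    refine FormalMultilinearSeries.le_radius_of_tendsto _ (l := 0) ?_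
    simpa only [FormalMultilinearSeries.ofScalars_norm, Real.coe_toNNReal _ hR] using hc
  have hx' : x ∈ Metric.eball (0 : F) (FormalMultilinearSeries.ofScalars F c).radius := by
    rw [mem_eball_zero_iff, enorm_eq_nnnorm]
    exact lt_of_lt_of_le (ENNReal.coe_lt_coe.2 (Real.lt_toNNReal_iff_coe_lt.2 hx)) hradius
  have h := (FormalMultilinearSeries.ofScalars F c).analyticOnNhd x hx'
  rwa [← FormalMultilinearSeries.ofScalarsSum, FormalMultilinearSeries.ofScalarsSum_eq_tsum] at h

end PowerSeries

theorem tendsto_natCast_int_cofinite : Tendsto ((↑) : ℕ → ℤ) atTop cofinite :=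
  Nat.cofinite_eq_atTop ▸ Nat.cast_injective.tendsto_cofinite

section Laurent

variable {F : Type*} [NontriviallyNormedField F] {a : ℤ → F} {r1 r2 r : ℝ}

theorem IsLaurentOn.tendsto_nat (ha : IsLaurentOn a r1 r2) (hr1 : r1 ≤ r) (hr2 : r ≤ r2) :
    Tendsto (fun n : ℕ => ‖a n‖ * r ^ n) atTop (𝓝 0) := by
  simpa only [Function.comp_def, zpow_natCast] using
    (ha r hr1 hr2).comp tendsto_natCast_int_cofinite

theorem IsLaurentOn.tendsto_neg_nat (ha : IsLaurentOn a r1 r2) (hr1 : r1 ≤ r) (hr2 : r ≤ r2) :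
    Tendsto (fun n : ℕ => ‖a (-n)‖ * r⁻¹ ^ n) atTop (𝓝 0) := by
  simpa only [Function.comp_def, zpow_neg, zpow_natCast, inv_pow] using
    (ha r hr1 hr2).comp (neg_injective.tendsto_cofinite.comp tendsto_natCast_int_cofinite)

theorem IsLaurentOn.summable [IsUltrametricDist F] [CompleteSpace F] (ha : IsLaurentOn a r1 r2)
    {z : F} (hz1 : r1 ≤ ‖z‖) (hz2 : ‖z‖ ≤ r2) : Summable fun n : ℤ => a n * z ^ n := by
  refine NonarchimedeanAddGroup.summable_of_tendsto_cofinite_zero ?_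
  rw [tendsto_zero_iff_norm_tendsto_zero]
  simpa only [norm_mul, norm_zpow] using ha ‖z‖ hz1 hz2

theorem Summable.tsum_mul_zpow_eq_add_tsum_mul_inv_pow [CompleteSpace F] {z : F}
    (hS : Summable fun n : ℤ => a n * z ^ n) :
    ∑' n : ℤ, a n * z ^ n = ∑' n : ℕ, a n * z ^ n + ∑' n : ℕ, a (-n) * z⁻¹ ^ n - a 0 := by
  have hnonneg : Summable fun n : ℕ => a n * z ^ (n : ℤ) := hS.comp_injective Nat.cast_injective
  have hnonpos : Summable fun n : ℕ => a (-n) * z ^ (-(n : ℤ)) :=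
    hS.comp_injective (neg_injective.comp Nat.cast_injective)
  rw [Summable.tsum_of_nat_of_neg (f := fun n : ℤ => a n * z ^ n) hnonneg hnonpos]
  simp only [zpow_neg, zpow_natCast, inv_pow, zpow_zero, mul_one]

end Laurent

/-- For an analytic function `f = Σ a_n z^n` on `A[r1,r2]` with `0 < r1 < r2 < ∞`, the function
`z ↦ Σ_{n∈ℤ} a_n z^n` is analytic (in Mathlib's sense: locally expandable in a convergent power
series) at every point `z0` with `r1 < |z0| < r2`. -/
theorem statement2 {F : Type*} [NontriviallyNormedField F] [IsUltrametricDist F]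
    [CompleteSpace F] (r1 r2 : ℝ) (h1 : 0 < r1) (h12 : r1 < r2)
    (a : ℤ → F) (ha : IsLaurentOn a r1 r2)
    (z0 : F) (hz1 : r1 < ‖z0‖) (hz2 : ‖z0‖ < r2) :
    AnalyticAt F (fun z : F => ∑' n : ℤ, a n * z ^ n) z0 := by
  have hz0 : z0 ≠ 0 := norm_pos_iff.1 (h1.trans hz1)
  have hregular : AnalyticAt F (fun z => ∑' n : ℕ, a n * z ^ n) z0 :=
    analyticAt_tsum_mul_pow_of_tendsto (ha.tendsto_nat h12.le le_rfl) hz2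
  have hprincipal : AnalyticAt F (fun z => ∑' n : ℕ, a (-n) * z⁻¹ ^ n) z0 := by
    have hinv : ‖z0⁻¹‖ < r1⁻¹ := by rw [norm_inv]; exact inv_strictAnti₀ h1 hz1
    exact (analyticAt_tsum_mul_pow_of_tendsto (ha.tendsto_neg_nat le_rfl h12.le) hinv).comp
      (analyticAt_inv hz0)
  have hannulus : ∀ᶠ z in 𝓝 z0, ‖z‖ ∈ Icc r1 r2 :=
    continuous_norm.continuousAt.eventually (Icc_mem_nhds hz1 hz2)
  refine ((hregular.add hprincipal).sub (analyticAt_const (v := a 0))).congr ?_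
  filter_upwards [hannulus] with z hz
  exact ((ha.summable hz.1 hz.2).tsum_mul_zpow_eq_add_tsum_mul_inv_pow).symm
end

section
/- (Logarithmic Derivative Lemma, analytic case.) Let 0 < r1 ≤ r2 < ∞, let f be an analytic function on A[r1,r2] with coefficients (a_n)_{n∈ℤ}, and let k ≥ 1 be an integer. Then the termwise k-th derivative f^{(k)}(z) = Σ_{n∈ℤ} n(n−1)⋯(n−k+1) a_n z^{n−k} (where the integer n(n−1)⋯(n−k+1) acts via the canonical ring map ℤ → F) is again an analytic function on A[r1,r2], and for every r ∈ [r1,r2] one has |f^{(k)}|_r = sup_{n∈ℤ} |n(n−1)⋯(n−k+1) · a_n| r^{n−k} ≤ |f|_r / r^k; in particular |d^k f / f|_r ≤ 1/r^k whenever f ≠ 0. -/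
/-!
In a non-archimedean field every integer has norm at most `1`, so the falling factorial
`n(n-1)⋯(n-k+1)` does not increase the norm of a coefficient. Hence the term of `f^{(k)}` at
`z^m` is dominated by the term of `f` at `z^{m+k}` divided by `r^k`, which gives both the
convergence of `f^{(k)}` on the annulus and the Gauss norm bound.
-/

open Filter Set

/-- The Gauss norm `|f|_r = sup_{n ∈ ℤ} |a_n| r^n`. -/
noncomputable def gaussNorm {F : Type*} [NontriviallyNormedField F] (a : ℤ → F) (r : ℝ) : ℝ :=
  sSup (Set.range fun n : ℤ => ‖a n‖ * r ^ n)

/-- The coefficients of the termwise `k`-th derivative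
`f^{(k)}(z) = Σ_n n(n-1)⋯(n-k+1) a_n z^{n-k}`, reindexed by `m = n - k`: the coefficient of
`z^m` is `(∏_{j<k} (m+k-j)) · a_{m+k}`, the integers acting via the canonical map `ℤ → F`. -/
noncomputable def derivCoeff {F : Type*} [NontriviallyNormedField F] (a : ℤ → F) (k : ℕ) :
    ℤ → F :=
  fun m : ℤ => (∏ j ∈ Finset.range k, ((m + k - j : ℤ) : F)) * a (m + k)

open Topology

section Ultrametric

variable {F : Type*} [NontriviallyNormedField F] [IsUltrametricDist F]

lemma norm_derivCoeff_le (a : ℤ → F) (k : ℕ) (m : ℤ) : ‖derivCoeff a k m‖ ≤ ‖a (m + k)‖ := by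
  rw [derivCoeff, norm_mul, norm_prod]
  exact mul_le_of_le_one_left (norm_nonneg _) <| Finset.prod_le_one (fun _ _ => norm_nonneg _)
    fun _ _ => IsUltrametricDist.norm_intCast_le_one F _

lemma norm_derivCoeff_mul_zpow_le (a : ℤ → F) (k : ℕ) {r : ℝ} (hr : 0 < r) (m : ℤ) :
    ‖derivCoeff a k m‖ * r ^ m ≤ ‖a (m + k)‖ * r ^ (m + k) / r ^ k := by
  rw [zpow_add₀ hr.ne', zpow_natCast, mul_div_assoc, mul_div_cancel_right₀ _ (pow_pos hr k).ne']
  gcongr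
  exact norm_derivCoeff_le a k m

lemma tendsto_norm_derivCoeff_mul_zpow {a : ℤ → F} {r : ℝ} (hr : 0 < r)
    (ha : Tendsto (fun n : ℤ => ‖a n‖ * r ^ n) cofinite (𝓝 0)) (k : ℕ) :
    Tendsto (fun m : ℤ => ‖derivCoeff a k m‖ * r ^ m) cofinite (𝓝 0) := by
  have hshift := (ha.comp (add_left_injective (k : ℤ)).tendsto_cofinite).div_const (r ^ k)
  rw [zero_div] at hshift
  exact squeeze_zero (fun m => by positivity) (norm_derivCoeff_mul_zpow_le a k hr) hshift

lemma IsLaurentOn.derivCoeff {a : ℤ → F} {r1 r2 : ℝ} (ha : IsLaurentOn a r1 r2) (h1 : 0 < r1)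
    (k : ℕ) : IsLaurentOn (derivCoeff a k) r1 r2 :=
  fun r hr1 hr2 => tendsto_norm_derivCoeff_mul_zpow (h1.trans_le hr1) (ha r hr1 hr2) k

lemma gaussNorm_derivCoeff_le {a : ℤ → F} {r : ℝ} (hr : 0 < r)
    (ha : BddAbove (range fun n : ℤ => ‖a n‖ * r ^ n)) (k : ℕ) :
    gaussNorm (derivCoeff a k) r ≤ gaussNorm a r / r ^ k := by
  refine csSup_le (range_nonempty _) ?_
  rintro _ ⟨m, rfl⟩
  calc ‖derivCoeff a k m‖ * r ^ m ≤ ‖a (m + k)‖ * r ^ (m + k) / r ^ k :=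
        norm_derivCoeff_mul_zpow_le a k hr m
    _ ≤ gaussNorm a r / r ^ k := by
        gcongr
        exact le_csSup ha ⟨m + k, rfl⟩

end Ultrametric

lemma gaussNorm_pos {F : Type*} [NontriviallyNormedField F] {a : ℤ → F} {r : ℝ} (hr : 0 < r)
    (ha : BddAbove (range fun n : ℤ => ‖a n‖ * r ^ n)) {n : ℤ} (hn : a n ≠ 0) :
    0 < gaussNorm a r :=
  (mul_pos (norm_pos_iff.mpr hn) (zpow_pos hr n)).trans_le (le_csSup ha ⟨n, rfl⟩)

theorem statement4_general {F : Type*} [NontriviallyNormedField F] [IsUltrametricDist F]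
    (r1 r2 : ℝ) (h1 : 0 < r1)
    (a : ℤ → F) (ha : IsLaurentOn a r1 r2) (k : ℕ) :
    IsLaurentOn (derivCoeff a k) r1 r2 ∧
      (∀ r : ℝ, r1 ≤ r → r ≤ r2 →
        gaussNorm (derivCoeff a k) r ≤ gaussNorm a r / r ^ k) ∧
      ((∃ n : ℤ, a n ≠ 0) → ∀ r : ℝ, r1 ≤ r → r ≤ r2 →
        gaussNorm (derivCoeff a k) r / gaussNorm a r ≤ 1 / r ^ k) := by
  have hbdd : ∀ r, r1 ≤ r → r ≤ r2 → BddAbove (range fun n : ℤ => ‖a n‖ * r ^ n) :=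
    fun r hr1 hr2 => (ha r hr1 hr2).bddAbove_range_of_cofinite
  have hle : ∀ r, r1 ≤ r → r ≤ r2 → gaussNorm (derivCoeff a k) r ≤ gaussNorm a r / r ^ k :=
    fun r hr1 hr2 => gaussNorm_derivCoeff_le (h1.trans_le hr1) (hbdd r hr1 hr2) k
  refine ⟨ha.derivCoeff h1 k, hle, ?_⟩
  rintro ⟨n, hn⟩ r hr1 hr2
  have hr : 0 < r := h1.trans_le hr1
  rw [div_le_div_iff₀ (gaussNorm_pos hr (hbdd r hr1 hr2) hn) (pow_pos hr k), one_mul,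
    ← le_div_iff₀ (pow_pos hr k)]
  exact hle r hr1 hr2

/-- Logarithmic Derivative Lemma, analytic case: for `f` analytic on `A[r1,r2]`
(`0 < r1 ≤ r2 < ∞`) and `k ≥ 1`, the termwise `k`-th derivative `f^{(k)}` is again analytic on
`A[r1,r2]`, its Gauss norm satisfies `|f^{(k)}|_r ≤ |f|_r / r^k` for every `r ∈ [r1,r2]`, and
in particular `|d^k f / f|_r = |f^{(k)}|_r / |f|_r ≤ 1/r^k` whenever `f ≠ 0`. -/
theorem statement4 {F : Type*} [NontriviallyNormedField F] [IsUltrametricDist F]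
    [CompleteSpace F] (r1 r2 : ℝ) (h1 : 0 < r1) (h12 : r1 ≤ r2)
    (a : ℤ → F) (ha : IsLaurentOn a r1 r2) (k : ℕ) (hk : 1 ≤ k) :
    IsLaurentOn (derivCoeff a k) r1 r2 ∧
      (∀ r : ℝ, r1 ≤ r → r ≤ r2 →
        gaussNorm (derivCoeff a k) r ≤ gaussNorm a r / r ^ k) ∧
      ((∃ n : ℤ, a n ≠ 0) → ∀ r : ℝ, r1 ≤ r → r ≤ r2 →
        gaussNorm (derivCoeff a k) r / gaussNorm a r ≤ 1 / r ^ k) :=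
  statement4_general r1 r2 h1 a ha k
end

section
/- (Logarithmic Derivative Lemma, meromorphic case in Wronskian form.) Let 0 < r1 ≤ r2 < ∞ and let f, g be analytic functions on A[r1,r2], with termwise derivatives f′, g′ and Cauchy products taken coefficientwise. Then for every r ∈ [r1,r2] one has |f′g − fg′|_r ≤ |f|_r |g|_r / r. Equivalently, for the meromorphic function h = f/g (g ≠ 0) one has |h′/h|_r ≤ 1/r, where |f/g|_r := |f|_r / |g|_r. -/
open Filter Set

/-- The coefficients of the termwise derivative `f′(z) = Σ_n n·a_n z^{n-1}`, reindexed: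
the coefficient of `z^m` is `(m+1)·a_{m+1}`, the integer acting via `ℤ → F`. -/
noncomputable def derivCoeff₁ {F : Type*} [NontriviallyNormedField F] (a : ℤ → F) : ℤ → F :=
  fun m : ℤ => ((m + 1 : ℤ) : F) * a (m + 1)

/-- The coefficients of the Cauchy product `fg`: `c_n = Σ_{i∈ℤ} a_i b_{n-i}`. -/
noncomputable def cauchyProd {F : Type*} [NontriviallyNormedField F] (a b : ℤ → F) : ℤ → F :=
  fun n : ℤ => ∑' i : ℤ, a i * b (n - i)

/-!
Every coefficient of `f′g` and of `fg′` in degree `n` is a (possibly infinite) sum of terms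
`k · a_i b_j` with `k ∈ ℤ` and `i + j = n + 1`. In a non-archimedean field `|k| ≤ 1`, and the
Cauchy estimates `|a_i| r^i ≤ |f|_r`, `|b_j| r^j ≤ |g|_r` bound each such term by
`|f|_r |g|_r / r^(n+1)`; the ultrametric inequality lets the bound pass to the sums (a divergent
`tsum` is `0`) and to their difference. Multiplying by `r^n` gives `|f′g − fg′|_r ≤ |f|_r |g|_r / r`.
-/

noncomputable def wronskian {F : Type*} [NontriviallyNormedField F] (a b : ℤ → F) : ℤ → F :=
  fun n : ℤ => cauchyProd (derivCoeff₁ a) b n - cauchyProd a (derivCoeff₁ b) n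

section GaussNorm

variable {F : Type*} [NontriviallyNormedField F] {a b : ℤ → F} {r C : ℝ}

lemma gaussNorm_nonneg (a : ℤ → F) (hr : 0 ≤ r) : 0 ≤ gaussNorm a r :=
  Real.sSup_nonneg <| by
    rintro x ⟨n, rfl⟩
    exact mul_nonneg (norm_nonneg _) (zpow_nonneg hr n)

lemma IsLaurentOn.bddAbove {r1 r2 : ℝ} (ha : IsLaurentOn a r1 r2) (hr1 : r1 ≤ r) (hr2 : r ≤ r2) :
    BddAbove (range fun n : ℤ => ‖a n‖ * r ^ n) :=
  (ha r hr1 hr2).bddAbove_range_of_cofinite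

lemma norm_mul_zpow_le_gaussNorm (ha : BddAbove (range fun n : ℤ => ‖a n‖ * r ^ n)) (n : ℤ) :
    ‖a n‖ * r ^ n ≤ gaussNorm a r :=
  le_csSup ha ⟨n, rfl⟩

lemma gaussNorm_le_of_forall_le (hC : 0 ≤ C) (h : ∀ n, ‖a n‖ * r ^ n ≤ C) :
    gaussNorm a r ≤ C :=
  Real.sSup_le (by rintro x ⟨n, rfl⟩; exact h n) hC

lemma norm_mul_norm_le_gaussNorm_mul_div_zpow (hr : 0 < r)
    (ha : BddAbove (range fun n : ℤ => ‖a n‖ * r ^ n))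
    (hb : BddAbove (range fun n : ℤ => ‖b n‖ * r ^ n)) (i j : ℤ) :
    ‖a i‖ * ‖b j‖ ≤ gaussNorm a r * gaussNorm b r / r ^ (i + j) := by
  rw [le_div_iff₀ (zpow_pos hr _), zpow_add₀ hr.ne']
  calc ‖a i‖ * ‖b j‖ * (r ^ i * r ^ j) = (‖a i‖ * r ^ i) * (‖b j‖ * r ^ j) := by ring
    _ ≤ gaussNorm a r * gaussNorm b r :=
      mul_le_mul (norm_mul_zpow_le_gaussNorm ha i) (norm_mul_zpow_le_gaussNorm hb j)
        (mul_nonneg (norm_nonneg _) (zpow_pos hr _).le) (gaussNorm_nonneg a hr.le)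

end GaussNorm

section Ultrametric

variable {F : Type*} [NontriviallyNormedField F] [IsUltrametricDist F] {a b : ℤ → F} {r M : ℝ}

lemma norm_derivCoeff₁_le (a : ℤ → F) (m : ℤ) : ‖derivCoeff₁ a m‖ ≤ ‖a (m + 1)‖ := by
  rw [derivCoeff₁, norm_mul]
  exact mul_le_of_le_one_left (norm_nonneg _) (IsUltrametricDist.norm_intCast_le_one F _)

lemma norm_cauchyProd_le {n : ℤ} {C : ℝ} (h : ∀ i, ‖a i‖ * ‖b (n - i)‖ ≤ C) :
    ‖cauchyProd a b n‖ ≤ C :=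
  IsUltrametricDist.norm_tsum_le_of_forall_le fun i => (norm_mul_le _ _).trans (h i)

lemma norm_cauchyProd_derivCoeff₁_left_le (hM : ∀ i j, ‖a i‖ * ‖b j‖ ≤ M / r ^ (i + j))
    (n : ℤ) :
    ‖cauchyProd (derivCoeff₁ a) b n‖ ≤ M / r ^ (n + 1) :=
  norm_cauchyProd_le fun i => calc
    ‖derivCoeff₁ a i‖ * ‖b (n - i)‖ ≤ ‖a (i + 1)‖ * ‖b (n - i)‖ :=
      mul_le_mul_of_nonneg_right (norm_derivCoeff₁_le a i) (norm_nonneg _)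
    _ ≤ M / r ^ (n + 1) := by
      simpa only [show i + 1 + (n - i) = n + 1 by ring] using hM (i + 1) (n - i)

lemma norm_cauchyProd_derivCoeff₁_right_le (hM : ∀ i j, ‖a i‖ * ‖b j‖ ≤ M / r ^ (i + j))
    (n : ℤ) :
    ‖cauchyProd a (derivCoeff₁ b) n‖ ≤ M / r ^ (n + 1) :=
  norm_cauchyProd_le fun i => calc
    ‖a i‖ * ‖derivCoeff₁ b (n - i)‖ ≤ ‖a i‖ * ‖b (n - i + 1)‖ :=
      mul_le_mul_of_nonneg_left (norm_derivCoeff₁_le b (n - i)) (norm_nonneg _)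
    _ ≤ M / r ^ (n + 1) := by
      simpa only [show i + (n - i + 1) = n + 1 by ring] using hM i (n - i + 1)

lemma norm_wronskian_le (hM : ∀ i j, ‖a i‖ * ‖b j‖ ≤ M / r ^ (i + j)) (n : ℤ) :
    ‖wronskian a b n‖ ≤ M / r ^ (n + 1) := by
  rw [wronskian, sub_eq_add_neg]
  refine (IsUltrametricDist.norm_add_le_max _ _).trans (max_le ?_ ?_)
  · exact norm_cauchyProd_derivCoeff₁_left_le hM n
  · simpa only [norm_neg] using norm_cauchyProd_derivCoeff₁_right_le hM n

theorem gaussNorm_wronskian_le (hr : 0 < r)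
    (ha : BddAbove (range fun n : ℤ => ‖a n‖ * r ^ n))
    (hb : BddAbove (range fun n : ℤ => ‖b n‖ * r ^ n)) :
    gaussNorm (wronskian a b) r ≤ gaussNorm a r * gaussNorm b r / r := by
  have hab := norm_mul_norm_le_gaussNorm_mul_div_zpow hr ha hb
  refine gaussNorm_le_of_forall_le
    (div_nonneg (mul_nonneg (gaussNorm_nonneg a hr.le) (gaussNorm_nonneg b hr.le)) hr.le)
    fun n => ?_
  calc ‖wronskian a b n‖ * r ^ n
      ≤ gaussNorm a r * gaussNorm b r / r ^ (n + 1) * r ^ n :=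
        mul_le_mul_of_nonneg_right (norm_wronskian_le hab n) (zpow_pos hr _).le
    _ = gaussNorm a r * gaussNorm b r / r := by
        rw [zpow_add_one₀ hr.ne']
        field_simp

end Ultrametric

theorem statement5_general {F : Type*} [NontriviallyNormedField F] [IsUltrametricDist F]
    (r1 r2 : ℝ) (h1 : 0 < r1)
    (a b : ℤ → F) (ha : IsLaurentOn a r1 r2) (hb : IsLaurentOn b r1 r2) :
    (∀ r : ℝ, r1 ≤ r → r ≤ r2 →
      gaussNorm (fun n : ℤ => cauchyProd (derivCoeff₁ a) b n - cauchyProd a (derivCoeff₁ b) n) r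
        ≤ gaussNorm a r * gaussNorm b r / r) ∧
    ((∃ n : ℤ, b n ≠ 0) → ∀ r : ℝ, r1 ≤ r → r ≤ r2 →
      gaussNorm (fun n : ℤ => cauchyProd (derivCoeff₁ a) b n - cauchyProd a (derivCoeff₁ b) n) r
          / (gaussNorm a r * gaussNorm b r)
        ≤ 1 / r) := by
  have hW : ∀ r : ℝ, r1 ≤ r → r ≤ r2 →
      gaussNorm (wronskian a b) r ≤ gaussNorm a r * gaussNorm b r / r := fun r hr1 hr2 =>
    gaussNorm_wronskian_le (h1.trans_le hr1) (ha.bddAbove hr1 hr2) (hb.bddAbove hr1 hr2)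
  refine ⟨hW, fun _ r hr1 hr2 => ?_⟩
  have hr : 0 < r := h1.trans_le hr1
  rcases (mul_nonneg (gaussNorm_nonneg a hr.le) (gaussNorm_nonneg b hr.le)).eq_or_lt with h | h
  · rw [← h, div_zero]
    positivity
  · rw [div_le_div_iff₀ h hr, one_mul]
    exact (le_div_iff₀ hr).mp (hW r hr1 hr2)

/-- Logarithmic Derivative Lemma, meromorphic case in Wronskian form: for `f, g` analytic on
`A[r1,r2]` (`0 < r1 ≤ r2 < ∞`), with termwise derivatives and coefficientwise Cauchy products,
one has `|f′g − fg′|_r ≤ |f|_r |g|_r / r` for every `r ∈ [r1,r2]`; equivalently, for the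
meromorphic function `h = f/g` (`g ≠ 0`, with `|f/g|_r := |f|_r / |g|_r`) one has
`|h′/h|_r = |f′g − fg′|_r / (|f|_r |g|_r) ≤ 1/r`. -/
theorem statement5 {F : Type*} [NontriviallyNormedField F] [IsUltrametricDist F]
    [CompleteSpace F] (r1 r2 : ℝ) (h1 : 0 < r1) (h12 : r1 ≤ r2)
    (a b : ℤ → F) (ha : IsLaurentOn a r1 r2) (hb : IsLaurentOn b r1 r2) :
    (∀ r : ℝ, r1 ≤ r → r ≤ r2 →
      gaussNorm (fun n : ℤ => cauchyProd (derivCoeff₁ a) b n - cauchyProd a (derivCoeff₁ b) n) r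
        ≤ gaussNorm a r * gaussNorm b r / r) ∧
    ((∃ n : ℤ, b n ≠ 0) → ∀ r : ℝ, r1 ≤ r → r ≤ r2 →
      gaussNorm (fun n : ℤ => cauchyProd (derivCoeff₁ a) b n - cauchyProd a (derivCoeff₁ b) n) r
          / (gaussNorm a r * gaussNorm b r)
        ≤ 1 / r) :=
  statement5_general r1 r2 h1 a b ha hb
end

section
/- (Non-archimedean Poisson–Jensen formula.) Let 0 < r1 ≤ r2 < ∞ and let f be a nonzero analytic function on A[r1,r2]. Then for all r, R with r1 ≤ r ≤ R ≤ r2, the function t ↦ K_f(t)/t is integrable on [r,R] and log |f|_R − log |f|_r = ∫_r^R K_f(t) dt/t. -/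
/-! `u ↦ log |f|_{exp u}` is the supremum of the affine functions `u ↦ log |a_n| + n u`, so a
dominant index `K_f(t)` is a subgradient of it at `log t`. Subgradients of a function are
monotone, so the integer-valued `K_f` is locally constant off a countable set; there
`log |f|_t = const + K_f(t) log t` locally, with derivative `K_f(t)/t`, and the fundamental
theorem of calculus with countably many exceptional points gives the formula. -/

open Filter Set

open Topology Real

/-- `k x` is a subgradient at `log x` of the function `u ↦ g (exp u)`. -/
def IsLogSubgradientOn (g k : ℝ → ℝ) (s : Set ℝ) : Prop :=
  ∀ x ∈ s, ∀ y ∈ s, k x * (log y - log x) ≤ g y - g x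

namespace IsLogSubgradientOn

variable {g k : ℝ → ℝ} {s : Set ℝ} {r R : ℝ}

theorem monotoneOn (h : IsLogSubgradientOn g k s) (hs : s ⊆ Ioi 0) : MonotoneOn k s := by
  intro x hx y hy hxy
  rcases hxy.eq_or_lt with rfl | hlt
  · exact le_rfl
  have hΔ : 0 < log y - log x := sub_pos.2 (log_lt_log (hs hx) hlt)
  have h₁ := h x hx y hy
  have h₂ := h y hy x hx
  exact le_of_mul_le_mul_right (by linarith) hΔ

theorem abs_sub_le (h : IsLogSubgradientOn g k (Icc r R)) (hr : 0 < r) {x y : ℝ}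
    (hx : x ∈ Icc r R) (hy : y ∈ Icc r R) :
    |g y - g x| ≤ (|k r| + |k R|) * |log y - log x| := by
  wlog hxy : x ≤ y generalizing x y
  · rw [abs_sub_comm, abs_sub_comm (log y)]
    exact this hy hx (le_of_not_ge hxy)
  have hmono := h.monotoneOn fun t ht => hr.trans_le ht.1
  have hrR : r ≤ R := hx.1.trans hx.2
  have hΔ : 0 ≤ log y - log x := sub_nonneg.2 (log_le_log (hr.trans_le hx.1) hxy)
  have lower : k r * (log y - log x) ≤ g y - g x :=
    (mul_le_mul_of_nonneg_right (hmono ⟨le_rfl, hrR⟩ hx hx.1) hΔ).trans (h x hx y hy)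
  have upper : g y - g x ≤ k R * (log y - log x) := by
    have h₁ := h y hy x hx
    have h₂ := mul_le_mul_of_nonneg_right (hmono hy ⟨hrR, le_rfl⟩ hy.2) hΔ
    linarith
  rw [abs_of_nonneg hΔ, abs_le]
  constructor <;> nlinarith [neg_abs_le (k r), le_abs_self (k R), abs_nonneg (k r),
    abs_nonneg (k R)]

theorem continuousOn (h : IsLogSubgradientOn g k (Icc r R)) (hr : 0 < r) :
    ContinuousOn g (Icc r R) := by
  intro x hx
  have hlog : Tendsto (fun y => (|k r| + |k R|) * |log y - log x|) (𝓝[Icc r R] x) (𝓝 0) := by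
    have hc : ContinuousAt (fun y => (|k r| + |k R|) * |log y - log x|) x :=
      (((continuousAt_log (hr.trans_le hx.1).ne').sub continuousAt_const).abs).const_mul _
    simpa using hc.continuousWithinAt.tendsto
  rw [ContinuousWithinAt, tendsto_iff_dist_tendsto_zero]
  refine squeeze_zero' (Eventually.of_forall fun _ => dist_nonneg) ?_ hlog
  filter_upwards [self_mem_nhdsWithin] with y hy
  exact h.abs_sub_le hr hx hy

theorem hasDerivAt (h : IsLogSubgradientOn g k s) {x : ℝ} (hx : s ∈ 𝓝 x) (hx0 : 0 < x)
    (hkx : ∀ᶠ t in 𝓝 x, k t = k x) : HasDerivAt g (k x / x) x := by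
  have hline : HasDerivAt (fun t => g x + k x * (log t - log x)) (k x / x) x := by
    simpa [div_eq_mul_inv] using
      (((hasDerivAt_log hx0.ne').sub_const (log x)).const_mul (k x)).const_add (g x)
  refine hline.congr_of_eventuallyEq ?_
  filter_upwards [hx, hkx] with t ht hkt
  have h₁ := h x (mem_of_mem_nhds hx) t ht
  have h₂ := h t ht x (mem_of_mem_nhds hx)
  rw [hkt] at h₂
  linarith

end IsLogSubgradientOn

theorem intervalIntegrable_div_of_monotoneOn {k : ℝ → ℝ} {r R : ℝ} (hr : 0 < r) (hrR : r ≤ R)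
    (hk : MonotoneOn k (Icc r R)) :
    IntervalIntegrable (fun t => k t / t) MeasureTheory.volume r R := by
  rw [← uIcc_of_le hrR] at hk
  have hinv : ContinuousOn (fun t : ℝ => t⁻¹) (uIcc r R) :=
    continuousOn_inv₀.mono fun t ht => (hr.trans_le (uIcc_of_le hrR ▸ ht).1).ne'
  simpa [div_eq_mul_inv] using hk.intervalIntegrable.mul_continuousOn hinv

theorem IsLogSubgradientOn.integral_eq_sub {g : ℝ → ℝ} {k : ℝ → ℤ} {r R : ℝ}
    (h : IsLogSubgradientOn g (fun t => (k t : ℝ)) (Icc r R)) (hr : 0 < r) (hrR : r ≤ R) :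
    IntervalIntegrable (fun t => (k t : ℝ) / t) MeasureTheory.volume r R ∧
      g R - g r = ∫ t in r..R, (k t : ℝ) / t := by
  have hmono_cast := h.monotoneOn fun t ht => hr.trans_le ht.1
  have hint := intervalIntegrable_div_of_monotoneOn hr hrR hmono_cast
  have hmono : MonotoneOn k (Icc r R) := fun x hx y hy hxy => Int.cast_le.1 (hmono_cast hx hy hxy)
  refine ⟨hint, ?_⟩
  refine (MeasureTheory.integral_eq_of_hasDerivAt_off_countable_of_le g _ hrR
    hmono.countable_not_continuousWithinAt (h.continuousOn hr) ?_ hint).symm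
  rintro x ⟨hx, hxc⟩
  have hnhds : Icc r R ∈ 𝓝 x := Icc_mem_nhds hx.1 hx.2
  have hcont : ContinuousAt k x :=
    (not_not.1 fun hc => hxc ⟨Ioo_subset_Icc_self hx, hc⟩).continuousAt hnhds
  have hkx : ∀ᶠ t in 𝓝 x, k t = k x := tendsto_pure.1 (nhds_discrete ℤ ▸ hcont.tendsto)
  exact h.hasDerivAt hnhds (hr.trans hx.1) (hkx.mono fun t ht => congrArg Int.cast ht)

section gaussNorm

variable {F : Type*} [NontriviallyNormedField F] {a : ℤ → F} {s t : ℝ}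

theorem norm_mul_zpow_le_gaussNorm_s7 (ht : Tendsto (fun n : ℤ => ‖a n‖ * t ^ n) cofinite (𝓝 0))
    (n : ℤ) : ‖a n‖ * t ^ n ≤ gaussNorm a t :=
  le_csSup ht.bddAbove_range_of_cofinite ⟨n, rfl⟩

theorem gaussNorm_pos_s7 (ht : Tendsto (fun n : ℤ => ‖a n‖ * t ^ n) cofinite (𝓝 0)) (ht0 : 0 < t)
    {n : ℤ} (hn : a n ≠ 0) : 0 < gaussNorm a t :=
  (mul_pos (norm_pos_iff.2 hn) (zpow_pos ht0 n)).trans_le (norm_mul_zpow_le_gaussNorm_s7 ht n)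

theorem mul_log_sub_le_log_gaussNorm_sub
    (hs : Tendsto (fun n : ℤ => ‖a n‖ * s ^ n) cofinite (𝓝 0)) (hs0 : 0 < s) (ht0 : 0 < t)
    (hpos : 0 < gaussNorm a t) {n : ℤ} (hn : ‖a n‖ * t ^ n = gaussNorm a t) :
    n * (log s - log t) ≤ log (gaussNorm a s) - log (gaussNorm a t) := by
  have han : ‖a n‖ ≠ 0 := fun h0 => hpos.ne' (by rw [← hn, h0, zero_mul])
  have hlog (u : ℝ) (hu : 0 < u) : log (‖a n‖ * u ^ n) = log ‖a n‖ + n * log u := by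
    rw [log_mul han (zpow_ne_zero _ hu.ne'), log_zpow]
  have hle : log (‖a n‖ * s ^ n) ≤ log (gaussNorm a s) :=
    log_le_log (mul_pos ((norm_nonneg _).lt_of_ne' han) (zpow_pos hs0 n))
      (norm_mul_zpow_le_gaussNorm_s7 hs n)
  rw [← hn, hlog t ht0]
  rw [hlog s hs0] at hle
  linarith

end gaussNorm

theorem statement7_general {F : Type*} [NontriviallyNormedField F] (r1 r2 : ℝ) (h1 : 0 < r1)
    (a : ℤ → F) (ha : IsLaurentOn a r1 r2) (hne : ∃ n : ℤ, a n ≠ 0)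
    (Kf : ℝ → ℤ)
    (hK : ∀ t : ℝ, r1 ≤ t → t ≤ r2 →
      IsGreatest {n : ℤ | ‖a n‖ * t ^ n = gaussNorm a t} (Kf t))
    (r R : ℝ) (hr : r1 ≤ r) (hrR : r ≤ R) (hR : R ≤ r2) :
    IntervalIntegrable (fun t : ℝ => (Kf t : ℝ) / t) MeasureTheory.volume r R ∧
      Real.log (gaussNorm a R) - Real.log (gaussNorm a r)
        = ∫ t in r..R, (Kf t : ℝ) / t := by
  obtain ⟨n, hn⟩ := hne
  have hr0 : 0 < r := h1.trans_le hr
  have hsub : IsLogSubgradientOn (fun t => log (gaussNorm a t)) (fun t => (Kf t : ℝ))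
      (Icc r R) := by
    intro t ⟨htr, htR⟩ s ⟨hsr, hsR⟩
    have ht := ha t (hr.trans htr) (htR.trans hR)
    exact mul_log_sub_le_log_gaussNorm_sub (ha s (hr.trans hsr) (hsR.trans hR))
      (hr0.trans_le hsr) (hr0.trans_le htr) (gaussNorm_pos_s7 ht (hr0.trans_le htr) hn)
      (hK t (hr.trans htr) (htR.trans hR)).1
  exact hsub.integral_eq_sub hr0 hrR

/-- Non-archimedean Poisson–Jensen formula: for a nonzero analytic function `f` on `A[r1,r2]`
(`0 < r1 ≤ r2 < ∞`), with `K_f(t) = max{n : |a_n| t^n = |f|_t}`, and any `r1 ≤ r ≤ R ≤ r2`,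
the function `t ↦ K_f(t)/t` is integrable on `[r,R]` and
`log |f|_R − log |f|_r = ∫_r^R K_f(t) dt/t`. -/
theorem statement7 {F : Type*} [NontriviallyNormedField F] [IsUltrametricDist F]
    [CompleteSpace F] (r1 r2 : ℝ) (h1 : 0 < r1) (h12 : r1 ≤ r2)
    (a : ℤ → F) (ha : IsLaurentOn a r1 r2) (hne : ∃ n : ℤ, a n ≠ 0)
    (Kf : ℝ → ℤ)
    (hK : ∀ t : ℝ, r1 ≤ t → t ≤ r2 →
      IsGreatest {n : ℤ | ‖a n‖ * t ^ n = gaussNorm a t} (Kf t))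
    (r R : ℝ) (hr : r1 ≤ r) (hrR : r ≤ R) (hR : R ≤ r2) :
    IntervalIntegrable (fun t : ℝ => (Kf t : ℝ) / t) MeasureTheory.volume r R ∧
      Real.log (gaussNorm a R) - Real.log (gaussNorm a r)
        = ∫ t in r..R, (Kf t : ℝ) / t :=
  statement7_general r1 r2 h1 a ha hne Kf hK r R hr hrR hR
end

section
/- (First Main Theorem for analytic functions on A[r1,∞).) Let r1 > 0 and let f be an analytic function on A[r1,∞), i.e. a Laurent series Σ_{n∈ℤ} a_n z^n such that |a_n| r^n → 0 as n → ±∞ for every r ≥ r1. Let a ∈ F be such that f − a (the series with constant coefficient a_0 − a and the same other coefficients) is not the zero series. Define for r ≥ r1: the characteristic function T_f(r) := max(0, log |f|_r), the proximity function m_f(a,r) := max(0, −log |f−a|_r), and the counting function N_f(a,r) := ∫_{r1}^r (K_{f−a}(t) − k_{f−a}(r1)) dt/t, where K_{f−a}(t) − k_{f−a}(r1) is the number of zeros of f − a in the annulus A[r1,t] counted with multiplicity. Then there exists a constant C > 0 such that |T_f(r) − m_f(a,r) − N_f(a,r)| ≤ C · log r for all r ≥ max(r1, 2); that is, T_f(r)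 = m_f(a,r) + N_f(a,r) + O(log r). -/
open Filter Set

/-- `a` is the coefficient family of a Laurent series defining an analytic function on the
unbounded annulus `A[r1,∞) = {z : |z| ≥ r1}`: for every `r ≥ r1`, the terms `|a n| r^n` tend
to `0` as `|n| → ∞`. -/
def IsLaurentOnRay {F : Type*} [NontriviallyNormedField F] (a : ℤ → F) (r1 : ℝ) : Prop :=
  ∀ r : ℝ, r1 ≤ r → Tendsto (fun n : ℤ => ‖a n‖ * r ^ n) cofinite (nhds 0)

/-- The coefficients of `f - c`: the constant coefficient becomes `a 0 - c`, the others are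
unchanged. -/
def subConst {F : Type*} [NontriviallyNormedField F] (a : ℤ → F) (c : F) : ℤ → F :=
  fun n : ℤ => if n = 0 then a 0 - c else a n

/-!
Write `b` for the coefficients of `f - c`. The dominant index `K_{f-c}(t)` is nondecreasing, so on
a bounded interval `|b|_t` is the maximum of finitely many monomials `|b_n| t^n`; just to the
right of `t` the monomial of index `K_{f-c}(t)` wins. Hence `t ↦ log |b|_t` is continuous with
right derivative `K_{f-c}(t) / t`, and the counting integral is the Jensen-type expression
`log |b|_r - log |b|_{r1} - k_{f-c}(r1) (log r - log r1)`. Finally `T_f(r) - m_f(c,r)` differs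
from `log |b|_r = log⁺ |b|_r - log⁺ |b|_r⁻¹` by at most `log⁺ |c|`, by the ultrametric inequality,
and the remaining terms are `O(log r)`.
-/

open Real Topology

lemma mul_zpow_lt_mul_zpow {A B s t : ℝ} {p q : ℤ} (hs : 0 < s) (hst : s < t) (hpq : p < q)
    (hB : 0 < B) (h : A * s ^ p ≤ B * s ^ q) : A * t ^ p < B * t ^ q := by
  have hts : 1 < t / s := (one_lt_div hs).2 hst
  have ht : ∀ m : ℤ, t ^ m = s ^ m * (t / s) ^ m := fun m => by
    rw [← mul_zpow, mul_div_cancel₀ _ hs.ne']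
  calc A * t ^ p = A * s ^ p * (t / s) ^ p := by rw [ht, mul_assoc]
    _ ≤ B * s ^ q * (t / s) ^ p := by gcongr
    _ < B * s ^ q * (t / s) ^ q := by gcongr
    _ = B * t ^ q := by rw [ht, mul_assoc]

lemma posLog_le_posLog_add_posLog {x y z : ℝ} (hx : 0 ≤ x) (h : x ≤ max y z) :
    log⁺ x ≤ log⁺ y + log⁺ z := by
  refine (posLog_le_posLog hx h).trans ?_
  rcases max_choice y z with hyz | hyz <;> rw [hyz] <;>
    linarith [posLog_nonneg (x := y), posLog_nonneg (x := z)]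

lemma abs_add_mul_log_sub_le {x k r s B : ℝ} (hr : 2 ≤ r) (hx : |x| ≤ B) :
    |x + k * (log r - log s)| ≤ ((B + |k| * |log s|) / log 2 + |k|) * log r := by
  have hlog2 : 0 < log 2 := log_pos one_lt_two
  have hlogr : log 2 ≤ log r := log_le_log two_pos hr
  have hk : |k * (log r - log s)| ≤ |k| * log r + |k| * |log s| :=
    calc |k * (log r - log s)| ≤ |k| * (|log r| + |log s|) := by
          rw [abs_mul]; gcongr; exact abs_sub _ _
      _ = |k| * log r + |k| * |log s| := by
          rw [abs_of_pos (hlog2.trans_le hlogr)]; ring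
  have hB : B + |k| * |log s| ≤ (B + |k| * |log s|) / log 2 * log r := by
    have := (abs_nonneg x).trans hx
    rw [div_mul_eq_mul_div, le_div_iff₀ hlog2]
    gcongr
  calc |x + k * (log r - log s)| ≤ |x| + |k * (log r - log s)| := abs_add_le _ _
    _ ≤ (B + |k| * |log s|) + |k| * log r := by linarith
    _ ≤ _ := by linarith

/-- `K_f(t)` and `k_f(t)` are the greatest and the least element of this set. -/
def dominantIndices {F : Type*} [NontriviallyNormedField F] (b : ℤ → F) (t : ℝ) : Set ℤ :=
  {n | ‖b n‖ * t ^ n = gaussNorm b t}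

section GaussNorm

variable {F : Type*} [NontriviallyNormedField F] {a b : ℤ → F} {r1 r s t : ℝ} {m n : ℤ}

lemma subConst_subConst_neg (a : ℤ → F) (c : F) : subConst (subConst a c) (-c) = a := by
  funext n
  by_cases hn : n = 0 <;> simp [subConst, hn]

lemma ne_zero_of_mem_dominantIndices (hm : m ∈ dominantIndices b t) (hG : 0 < gaussNorm b t) :
    b m ≠ 0 := by
  rintro hbm
  change ‖b m‖ * t ^ m = gaussNorm b t at hm
  rw [hbm, norm_zero, zero_mul] at hm
  exact hG.ne hm

namespace IsLaurentOnRay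

lemma subConst (ha : IsLaurentOnRay a r1) (c : F) : IsLaurentOnRay (subConst a c) r1 := by
  intro r hr
  refine (ha r hr).congr' ?_
  filter_upwards [(finite_singleton (0 : ℤ)).compl_mem_cofinite] with n hn
  simp [_root_.subConst, show n ≠ 0 from hn]

lemma le_gaussNorm (hb : IsLaurentOnRay b r1) (ht : r1 ≤ t) (n : ℤ) :
    ‖b n‖ * t ^ n ≤ gaussNorm b t :=
  le_csSup (hb t ht).bddAbove_range_of_cofinite ⟨n, rfl⟩

lemma gaussNorm_nonneg (hb : IsLaurentOnRay b r1) (ht : r1 ≤ t) : 0 ≤ gaussNorm b t :=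
  (norm_nonneg _).trans (by simpa using hb.le_gaussNorm ht 0)

lemma gaussNorm_pos (hb : IsLaurentOnRay b r1) (ht : r1 ≤ t) (ht0 : 0 < t)
    (hm : IsGreatest (dominantIndices b t) m) : 0 < gaussNorm b t := by
  by_contra! hG
  -- if `|b|_t ≤ 0` then every index is dominant, in particular `m + 1`
  have hterm : m + 1 ∈ dominantIndices b t :=
    le_antisymm (hb.le_gaussNorm ht _) (hG.trans (by positivity))
  exact (lt_add_one m).not_ge (hm.2 hterm)

lemma gaussNorm_subConst_le [IsUltrametricDist F] (ha : IsLaurentOnRay a r1) (hr : r1 ≤ r)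
    (c : F) : gaussNorm (_root_.subConst a c) r ≤ max (gaussNorm a r) ‖c‖ := by
  refine Real.sSup_le ?_ ((norm_nonneg c).trans (le_max_right _ _))
  rintro _ ⟨n, rfl⟩
  by_cases hn : n = 0
  · have h0 : ‖a 0 + -c‖ ≤ max (gaussNorm a r) ‖c‖ :=
      calc ‖a 0 + -c‖ ≤ max ‖a 0‖ ‖-c‖ := IsUltrametricDist.norm_add_le_max _ _
        _ ≤ max (gaussNorm a r) ‖c‖ := by
          rw [norm_neg]; gcongr; simpa using ha.le_gaussNorm hr 0
    simpa [_root_.subConst, hn, sub_eq_add_neg] using h0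
  · simpa [_root_.subConst, hn] using (ha.le_gaussNorm hr n).trans (le_max_left _ ‖c‖)

lemma abs_posLog_gaussNorm_sub_le [IsUltrametricDist F] (ha : IsLaurentOnRay a r1) (hr : r1 ≤ r)
    (c : F) : |log⁺ (gaussNorm a r) - log⁺ (gaussNorm (_root_.subConst a c) r)| ≤ log⁺ ‖c‖ := by
  have hb := ha.subConst c
  have hab : gaussNorm a r ≤ max (gaussNorm (_root_.subConst a c) r) ‖c‖ := by
    simpa [subConst_subConst_neg] using hb.gaussNorm_subConst_le hr (-c)
  rw [abs_le]
  constructor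
  · linarith [posLog_le_posLog_add_posLog (hb.gaussNorm_nonneg hr) (ha.gaussNorm_subConst_le hr c)]
  · linarith [posLog_le_posLog_add_posLog (ha.gaussNorm_nonneg hr) hab]

lemma gaussNorm_eq_sup' (hb : IsLaurentOnRay b r1) (ht : r1 ≤ t) {S : Finset ℤ}
    (hS : S.Nonempty) (hm : m ∈ dominantIndices b t) (hmS : m ∈ S) :
    gaussNorm b t = S.sup' hS (fun n => ‖b n‖ * t ^ n) :=
  le_antisymm (hm.symm.le.trans (S.le_sup' (fun n => ‖b n‖ * t ^ n) hmS))
    (S.sup'_le hS _ fun n _ => hb.le_gaussNorm ht n)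

lemma le_of_mem_dominantIndices (hb : IsLaurentOnRay b r1) (hs : r1 ≤ s) (hs0 : 0 < s)
    (hst : s < t) (hm : m ∈ dominantIndices b s) (hbm : b m ≠ 0)
    (hn : n ∈ dominantIndices b t) : m ≤ n := by
  by_contra! hnm
  have hlt : ‖b n‖ * t ^ n < ‖b m‖ * t ^ m :=
    mul_zpow_lt_mul_zpow hs0 hst hnm (norm_pos_iff.2 hbm) (hm ▸ hb.le_gaussNorm hs n)
  exact hlt.not_ge (hn ▸ hb.le_gaussNorm (hs.trans hst.le) m)

variable {K : ℝ → ℤ}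

lemma monotoneOn_dominantIndex (hb : IsLaurentOnRay b r1) (h1 : 0 < r1)
    (hK : ∀ t, r1 ≤ t → IsGreatest (dominantIndices b t) (K t)) : MonotoneOn K (Ici r1) := by
  intro s hs t ht hst
  rcases hst.eq_or_lt with rfl | hst
  · rfl
  have hs0 : 0 < s := h1.trans_le hs
  exact hb.le_of_mem_dominantIndices hs hs0 hst (hK s hs).1
    (ne_zero_of_mem_dominantIndices (hK s hs).1 (hb.gaussNorm_pos hs hs0 (hK s hs))) (hK t ht).1

lemma continuousOn_gaussNorm (hb : IsLaurentOnRay b r1) (h1 : 0 < r1)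
    (hK : ∀ t, r1 ≤ t → IsGreatest (dominantIndices b t) (K t)) (R : ℝ) :
    ContinuousOn (gaussNorm b) (Icc r1 R) := by
  intro x hx
  have hKS : ∀ t ∈ Icc r1 R, K t ∈ Finset.Icc (K r1) (K R) := fun t ht =>
    Finset.mem_Icc.2 ⟨hb.monotoneOn_dominantIndex h1 hK self_mem_Ici ht.1 ht.1,
      hb.monotoneOn_dominantIndex h1 hK ht.1 (ht.1.trans ht.2) ht.2⟩
  have hS : (Finset.Icc (K r1) (K R)).Nonempty := ⟨K x, hKS x hx⟩
  refine (ContinuousOn.finset_sup'_apply hS fun n _ => ?_).congr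
    (fun t ht => hb.gaussNorm_eq_sup' ht.1 hS (hK t ht.1).1 (hKS t ht)) x hx
  exact continuousOn_const.mul
    (continuousOn_id.zpow₀ n fun t ht => Or.inl (h1.trans_le ht.1).ne')

lemma gaussNorm_eventuallyEq_nhdsGE (hb : IsLaurentOnRay b r1) (h1 : 0 < r1)
    (hK : ∀ t, r1 ≤ t → IsGreatest (dominantIndices b t) (K t)) {x : ℝ} (hx : r1 ≤ x) :
    ∀ᶠ t in 𝓝[≥] x, gaussNorm b t = ‖b (K x)‖ * t ^ K x := by
  have hx0 : 0 < x := h1.trans_le hx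
  have hmono := hb.monotoneOn_dominantIndex h1 hK
  have hx1 : x + 1 ∈ Ici r1 := mem_Ici.2 (by linarith)
  set S := Finset.Icc (K x) (K (x + 1))
  have hterms : ∀ᶠ t in 𝓝[≥] x, ∀ n ∈ S, ‖b n‖ * t ^ n ≤ ‖b (K x)‖ * t ^ K x := by
    rw [eventually_all_finset]
    intro n hn
    rcases (Finset.mem_Icc.1 hn).1.eq_or_lt with rfl | hlt
    · exact Eventually.of_forall fun _ => le_rfl
    have hnx : ‖b n‖ * x ^ n < ‖b (K x)‖ * x ^ K x := by
      rw [(hK x hx).1]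
      exact (hb.le_gaussNorm hx n).lt_of_ne fun h => hlt.not_ge ((hK x hx).2 h)
    have hcont : ∀ k : ℤ, ContinuousAt (fun t : ℝ => ‖b k‖ * t ^ k) x := fun k =>
      continuousAt_const.mul (continuousAt_zpow₀ x k (Or.inl hx0.ne'))
    exact (((hcont n).eventually_lt (hcont (K x)) hnx).filter_mono nhdsWithin_le_nhds).mono
      fun _ h => h.le
  filter_upwards [Ico_mem_nhdsGE (lt_add_one x), hterms] with t ht hterm
  have ht1 : r1 ≤ t := hx.trans ht.1
  have hKt : K t ∈ S := Finset.mem_Icc.2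
    ⟨hmono hx ht1 ht.1, hmono ht1 hx1 ht.2.le⟩
  rw [hb.gaussNorm_eq_sup' ht1 ⟨_, hKt⟩ (hK t ht1).1 hKt]
  have hKx : K x ∈ S := Finset.mem_Icc.2 ⟨le_rfl, hmono hx hx1 (by linarith)⟩
  exact le_antisymm (Finset.sup'_le _ _ hterm) (S.le_sup' (fun n => ‖b n‖ * t ^ n) hKx)

lemma hasDerivWithinAt_log_gaussNorm (hb : IsLaurentOnRay b r1) (h1 : 0 < r1)
    (hK : ∀ t, r1 ≤ t → IsGreatest (dominantIndices b t) (K t)) {x : ℝ} (hx : r1 ≤ x) :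
    HasDerivWithinAt (fun t => log (gaussNorm b t)) (K x / x) (Ioi x) x := by
  have hx0 : 0 < x := h1.trans_le hx
  have hbK : ‖b (K x)‖ ≠ 0 := norm_ne_zero_iff.2 <|
    ne_zero_of_mem_dominantIndices (hK x hx).1 (hb.gaussNorm_pos hx hx0 (hK x hx))
  have hlocal : HasDerivAt (fun t => log ‖b (K x)‖ + K x * log t) (K x / x) x := by
    simpa [div_eq_mul_inv] using
      ((hasDerivAt_log hx0.ne').const_mul (K x : ℝ)).const_add (log ‖b (K x)‖)
  refine (hlocal.hasDerivWithinAt.congr_of_eventuallyEq_of_mem ?_ self_mem_Ici).mono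
    Ioi_subset_Ici_self
  filter_upwards [hb.gaussNorm_eventuallyEq_nhdsGE h1 hK hx, self_mem_nhdsWithin]
    with t hGt (htx : x ≤ t)
  rw [hGt, log_mul hbK (zpow_ne_zero _ (hx0.trans_le htx).ne'), log_zpow]

lemma intervalIntegrable_dominantIndex_div (hb : IsLaurentOnRay b r1) (h1 : 0 < r1)
    (hK : ∀ t, r1 ≤ t → IsGreatest (dominantIndices b t) (K t)) {R : ℝ} (hR : r1 ≤ R) :
    IntervalIntegrable (fun t => (K t : ℝ) / t) MeasureTheory.volume r1 R := by
  have hmono : MonotoneOn (fun t => (K t : ℝ)) (uIcc r1 R) := by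
    rw [uIcc_of_le hR]
    exact fun s hs t ht hst => Int.cast_le.2
      (hb.monotoneOn_dominantIndex h1 hK hs.1 ht.1 hst)
  have hinv : ContinuousOn (fun t : ℝ => t⁻¹) (uIcc r1 R) := by
    rw [uIcc_of_le hR]
    exact continuousOn_inv₀.mono fun t ht => (h1.trans_le ht.1).ne'
  simpa [div_eq_mul_inv] using hmono.intervalIntegrable.mul_continuousOn hinv

lemma integral_dominantIndex_div (hb : IsLaurentOnRay b r1) (h1 : 0 < r1)
    (hK : ∀ t, r1 ≤ t → IsGreatest (dominantIndices b t) (K t)) {R : ℝ} (hR : r1 ≤ R) :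
    ∫ t in r1..R, (K t : ℝ) / t = log (gaussNorm b R) - log (gaussNorm b r1) :=
  intervalIntegral.integral_eq_sub_of_hasDeriv_right_of_le hR
    ((hb.continuousOn_gaussNorm h1 hK R).log fun t ht =>
      (hb.gaussNorm_pos ht.1 (h1.trans_le ht.1) (hK t ht.1)).ne')
    (fun _ hx => hb.hasDerivWithinAt_log_gaussNorm h1 hK hx.1.le)
    (hb.intervalIntegrable_dominantIndex_div h1 hK hR)

lemma integral_dominantIndex_sub_div (hb : IsLaurentOnRay b r1) (h1 : 0 < r1)
    (hK : ∀ t, r1 ≤ t → IsGreatest (dominantIndices b t) (K t)) (k : ℤ) {R : ℝ} (hR : r1 ≤ R) :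
    ∫ t in r1..R, ((K t - k : ℤ) : ℝ) / t
      = log (gaussNorm b R) - log (gaussNorm b r1) - k * (log R - log r1) := by
  have hR0 : 0 < R := h1.trans_le hR
  have hinv : IntervalIntegrable (fun t : ℝ => t⁻¹) MeasureTheory.volume r1 R :=
    intervalIntegrable_inv_iff.2 <| Or.inr <| by
      rw [uIcc_of_le hR]; exact fun h => h1.not_ge h.1
  have hsplit : ∀ t, ((K t - k : ℤ) : ℝ) / t = (K t : ℝ) / t - k * t⁻¹ := fun t => by
    push_cast; ring
  simp_rw [hsplit]
  rw [intervalIntegral.integral_sub (hb.intervalIntegrable_dominantIndex_div h1 hK hR)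
      (hinv.const_mul _),
    hb.integral_dominantIndex_div h1 hK hR, intervalIntegral.integral_const_mul,
    integral_inv_of_pos h1 hR0, log_div hR0.ne' h1.ne']

end IsLaurentOnRay

end GaussNorm

theorem statement10_general {F : Type*} [NontriviallyNormedField F] [IsUltrametricDist F]
    (r1 : ℝ) (h1 : 0 < r1)
    (a : ℤ → F) (ha : IsLaurentOnRay a r1)
    (c : F)
    (Kf : ℝ → ℤ)
    (hKf : ∀ t : ℝ, r1 ≤ t →
      IsGreatest {n : ℤ | ‖subConst a c n‖ * t ^ n = gaussNorm (subConst a c) t} (Kf t))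
    (k1 : ℤ) :
    ∃ C : ℝ, 0 < C ∧ ∀ r : ℝ, max r1 2 ≤ r →
      |max 0 (Real.log (gaussNorm a r))
          - max 0 (-Real.log (gaussNorm (subConst a c) r))
          - ∫ t in r1..r, ((Kf t - k1 : ℤ) : ℝ) / t|
        ≤ C * Real.log r := by
  set b := subConst a c
  have hb : IsLaurentOnRay b r1 := ha.subConst c
  set B := log⁺ ‖c‖ + |log (gaussNorm b r1)|
  have hB : 0 ≤ B := by have := posLog_nonneg (x := ‖c‖); positivity
  refine ⟨(B + |(k1 : ℝ)| * |log r1|) / log 2 + |(k1 : ℝ)| + 1, by positivity, fun r hr => ?_⟩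
  obtain ⟨hr1, hr2⟩ := max_le_iff.1 hr
  have hTm : max 0 (log (gaussNorm a r)) - max 0 (-log (gaussNorm b r))
      = (log⁺ (gaussNorm a r) - log⁺ (gaussNorm b r)) + log (gaussNorm b r) := by
    rw [← log_inv, ← posLog_sub_posLog_inv (x := gaussNorm b r)]
    simp only [posLog_apply]
    ring
  have hbounded : |(log⁺ (gaussNorm a r) - log⁺ (gaussNorm b r)) + log (gaussNorm b r1)| ≤ B :=
    (abs_add_le _ _).trans (add_le_add_left (ha.abs_posLog_gaussNorm_sub_le hr1 c) _)
  rw [hb.integral_dominantIndex_sub_div h1 hKf k1 hr1, hTm]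
  calc _ = |(log⁺ (gaussNorm a r) - log⁺ (gaussNorm b r)) + log (gaussNorm b r1)
          + k1 * (log r - log r1)| := by congr 1; ring
    _ ≤ ((B + |(k1 : ℝ)| * |log r1|) / log 2 + |(k1 : ℝ)|) * log r :=
          abs_add_mul_log_sub_le hr2 hbounded
    _ ≤ _ := mul_le_mul_of_nonneg_right (by linarith) (log_nonneg (by linarith))

/-- First Main Theorem for analytic functions on `A[r1,∞)`, `r1 > 0`: for `f = Σ a_n z^n`
analytic on `A[r1,∞)` and `c ∈ F` with `f - c` not the zero series, writing
`T_f(r) = max(0, log |f|_r)`, `m_f(c,r) = max(0, −log |f−c|_r)`, and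
`N_f(c,r) = ∫_{r1}^r (K_{f−c}(t) − k_{f−c}(r1)) dt/t` (the counting function for the zeros of
`f − c`, where `K_{f−c}(t) = max{n : |b_n| t^n = |f−c|_t}` and
`k_{f−c}(r1) = min{n : |b_n| r1^n = |f−c|_{r1}}` for the coefficients `b` of `f−c`),
there is `C > 0` with `|T_f(r) − m_f(c,r) − N_f(c,r)| ≤ C·log r` for all `r ≥ max(r1,2)`,
i.e. `T_f(r) = m_f(c,r) + N_f(c,r) + O(log r)`. -/
theorem statement10 {F : Type*} [NontriviallyNormedField F] [IsUltrametricDist F]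
    [CompleteSpace F] (r1 : ℝ) (h1 : 0 < r1)
    (a : ℤ → F) (ha : IsLaurentOnRay a r1)
    (c : F) (hne : ∃ n : ℤ, subConst a c n ≠ 0)
    (Kf : ℝ → ℤ)
    (hKf : ∀ t : ℝ, r1 ≤ t →
      IsGreatest {n : ℤ | ‖subConst a c n‖ * t ^ n = gaussNorm (subConst a c) t} (Kf t))
    (k1 : ℤ)
    (hk1 : IsLeast {n : ℤ | ‖subConst a c n‖ * r1 ^ n = gaussNorm (subConst a c) r1} k1) :
    ∃ C : ℝ, 0 < C ∧ ∀ r : ℝ, max r1 2 ≤ r →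
      |max 0 (Real.log (gaussNorm a r))
          - max 0 (-Real.log (gaussNorm (subConst a c) r))
          - ∫ t in r1..r, ((Kf t - k1 : ℤ) : ℝ) / t|
        ≤ C * Real.log r :=
  statement10_general r1 h1 a ha c Kf hKf k1
end
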